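/- Canonicity of axiom BD2: let F = (A, Q, ▷, ◇, ▷', ◇') be a heterogeneous LRC-algebra with canonical extensions A^δ, Q^δ, π-extended operations ▷^π and ▷'^π, and σ-extended operation ◇'^σ. Then q ▷'^π w ≤ q ▷^π (◇'^σ w) for all q, w ∈ Q^δ. -/

import Mathlib

/-! ## Heterogeneous LRC-algebras -/

/-- A heterogeneous LRC-algebra `F = (W, R, ▷, ◇, ▷', ◇')`: `W` is a Heyting
algebra, `R` is a bounded distributive lattice with an associative product
`·` (here `mul`) preserving finite joins in each coordinate whose unit is the
top element `1 = ⊤` of `R`; `◇ : W → W` (`dia`) and `◇' : R → W` (`diaR`)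
preserve finite joins; `▷ : R × W → W` (`box`) turns finite joins in its first
coordinate into meets and is monotone in its second coordinate;
`▷' : R × R → W` (`boxR`) turns finite joins in its first coordinate into
meets and preserves finite meets in its second coordinate; and the axioms
B3, BD1, BD2 hold. -/
structure LRCAlgebra (W : Type*) (R : Type*) [iW : HeytingAlgebra W]
    [iR : DistribLattice R] [iB : BoundedOrder R] where
  mul : R → R → R
  mul_assoc : ∀ a b c, mul (mul a b) c = mul a (mul b c)
  mul_top : ∀ a, mul a ⊤ = a
  top_mul : ∀ a, mul ⊤ a = a
  mul_sup_left : ∀ a b c, mul (a ⊔ b) c = mul a c ⊔ mul b c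
  mul_sup_right : ∀ a b c, mul a (b ⊔ c) = mul a b ⊔ mul a c
  mul_bot_left : ∀ a, mul ⊥ a = ⊥
  mul_bot_right : ∀ a, mul a ⊥ = ⊥
  dia : W → W
  dia_bot : dia ⊥ = ⊥
  dia_sup : ∀ a b, dia (a ⊔ b) = dia a ⊔ dia b
  diaR : R → W
  diaR_bot : diaR ⊥ = ⊥
  diaR_sup : ∀ a b, diaR (a ⊔ b) = diaR a ⊔ diaR b
  box : R → W → W
  box_sup : ∀ α β a, box (α ⊔ β) a = box α a ⊓ box β a
  box_bot : ∀ a, box ⊥ a = ⊤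
  box_mono : ∀ (α : R) {a b : W}, a ≤ b → box α a ≤ box α b
  boxR : R → R → W
  boxR_sup : ∀ α β γ, boxR (α ⊔ β) γ = boxR α γ ⊓ boxR β γ
  boxR_bot : ∀ γ, boxR ⊥ γ = ⊤
  boxR_inf : ∀ α β γ, boxR α (β ⊓ γ) = boxR α β ⊓ boxR α γ
  boxR_top : ∀ α, boxR α ⊤ = ⊤
  b3 : ∀ α β a, box α (box β a) ≤ box (mul α β) a
  bd1 : ∀ α a, diaR α ⊓ box α a ≤ dia a
  bd2 : ∀ α β, boxR α β ≤ box α (diaR β)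

/-! ## Canonical extensions of bounded distributive lattices -/

/-- A *canonical extension* of a bounded distributive lattice `L` is a
complete (distributive) lattice `Lδ` containing `L` as a bounded sublattice
(via the embedding `e`) such that (denseness) every element of `Lδ` is both a
join of closed elements (meets of elements of `L`) and a meet of open elements
(joins of elements of `L`), and (compactness) whenever `⋀ e '' S ≤ ⋁ e '' T`
there are finite `F ⊆ S`, `G ⊆ T` with `⋀ e '' F ≤ ⋁ e '' G`. -/
structure CanonicalExtension (L : Type*) [DistribLattice L] [OrderBot L]
    [OrderTop L] (Lδ : Type*) [CompleteLattice Lδ] where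
  e : L → Lδ
  inj : Function.Injective e
  map_sup : ∀ a b, e (a ⊔ b) = e a ⊔ e b
  map_inf : ∀ a b, e (a ⊓ b) = e a ⊓ e b
  map_bot : e ⊥ = ⊥
  map_top : e ⊤ = ⊤
  dense_closed : ∀ u : Lδ,
    u = sSup {k | (∃ S : Set L, k = sInf (e '' S)) ∧ k ≤ u}
  dense_open : ∀ u : Lδ,
    u = sInf {o | (∃ S : Set L, o = sSup (e '' S)) ∧ u ≤ o}
  compact : ∀ S T : Set L, sInf (e '' S) ≤ sSup (e '' T) →
    ∃ Fs Gs : Finset L, ↑Fs ⊆ S ∧ ↑Gs ⊆ T ∧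
      sInf (e '' ↑Fs) ≤ sSup (e '' ↑Gs)

namespace CanonicalExtension

variable {L : Type*} [DistribLattice L] [OrderBot L] [OrderTop L]
  {Lδ : Type*} [CompleteLattice Lδ]

/-- An element of `Lδ` is *closed* if it is a meet of elements of `L`. -/
def IsClosed (C : CanonicalExtension L Lδ) (k : Lδ) : Prop :=
  ∃ S : Set L, k = sInf (C.e '' S)

/-- An element of `Lδ` is *open* if it is a join of elements of `L`. -/
def IsOpen (C : CanonicalExtension L Lδ) (o : Lδ) : Prop :=
  ∃ S : Set L, o = sSup (C.e '' S)

end CanonicalExtension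

/-! ## The σ- and π-extensions of the operations of a heterogeneous
LRC-algebra to the canonical extensions -/

section Extensions

variable {W R : Type*} [HeytingAlgebra W] [DistribLattice R] [BoundedOrder R]
  {Wδ Rδ : Type*} [CompletelyDistribLattice Wδ] [CompletelyDistribLattice Rδ]
  (F : LRCAlgebra W R)
  (CW : CanonicalExtension W Wδ) (CR : CanonicalExtension R Rδ)

/-- `◇^σ`: for closed `k`, `◇^σ k = ⋀{◇a : a ∈ W, k ≤ a}`, and for arbitrary
`u`, `◇^σ u = ⋁{◇^σ k : k closed, k ≤ u}`. -/
noncomputable def diaSigma (u : Wδ) : Wδ :=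
  ⨆ k : {k : Wδ // CW.IsClosed k ∧ k ≤ u},
    ⨅ a : {a : W // k.1 ≤ CW.e a}, CW.e (F.dia a.1)

/-- `◇'^σ`: for closed `κ`, `◇'^σ κ = ⋀{◇'α : α ∈ R, κ ≤ α}`, and for
arbitrary `q`, `◇'^σ q = ⋁{◇'^σ κ : κ closed, κ ≤ q}`. -/
noncomputable def diaRSigma (q : Rδ) : Wδ :=
  ⨆ κ : {κ : Rδ // CR.IsClosed κ ∧ κ ≤ q},
    ⨅ α : {α : R // κ.1 ≤ CR.e α}, CW.e (F.diaR α.1)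

/-- `κ ▷^π o` for `κ ∈ K(Rδ)`, `o ∈ O(Wδ)`:
`⋁{α ▷ a : a ∈ W, a ≤ o, α ∈ R, κ ≤ α}`. -/
noncomputable def boxPiKO (κ : Rδ) (o : Wδ) : Wδ :=
  ⨆ p : {p : R × W // CW.e p.2 ≤ o ∧ κ ≤ CR.e p.1}, CW.e (F.box p.1.1 p.1.2)

/-- `▷^π`: `q ▷^π u = ⋀{κ ▷^π o : o open, u ≤ o, κ closed, κ ≤ q}`. -/
noncomputable def boxPi (q : Rδ) (u : Wδ) : Wδ :=
  ⨅ x : {x : Rδ × Wδ // CW.IsOpen x.2 ∧ u ≤ x.2 ∧ CR.IsClosed x.1 ∧ x.1 ≤ q},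
    boxPiKO F CW CR x.1.1 x.1.2

/-- `κ ▷'^π ω` for `κ ∈ K(Rδ)`, `ω ∈ O(Rδ)`:
`⋁{α ▷' β : β ∈ R, β ≤ ω, α ∈ R, κ ≤ α}`. -/
noncomputable def boxRPiKO (κ ω : Rδ) : Wδ :=
  ⨆ p : {p : R × R // CR.e p.2 ≤ ω ∧ κ ≤ CR.e p.1}, CW.e (F.boxR p.1.1 p.1.2)

/-- `▷'^π`: `q ▷'^π w = ⋀{κ ▷'^π ω : ω open, w ≤ ω, κ closed, κ ≤ q}`. -/
noncomputable def boxRPi (q w : Rδ) : Wδ :=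
  ⨅ x : {x : Rδ × Rδ // CR.IsOpen x.2 ∧ w ≤ x.2 ∧ CR.IsClosed x.1 ∧ x.1 ≤ q},
    boxRPiKO F CW CR x.1.1 x.1.2

/-- `κ₁ ·^σ κ₂` for closed `κ₁, κ₂`: `⋀{α·β : α, β ∈ R, κ₁ ≤ α, κ₂ ≤ β}`. -/
noncomputable def mulSigmaKK (κ₁ κ₂ : Rδ) : Rδ :=
  ⨅ p : {p : R × R // κ₁ ≤ CR.e p.1 ∧ κ₂ ≤ CR.e p.2}, CR.e (F.mul p.1.1 p.1.2)

/-- `·^σ`: `q₁ ·^σ q₂ = ⋁{κ₁ ·^σ κ₂ : κ₁, κ₂ closed, κ₁ ≤ q₁, κ₂ ≤ q₂}`. -/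
noncomputable def mulSigma (q₁ q₂ : Rδ) : Rδ :=
  ⨆ p : {p : Rδ × Rδ // CR.IsClosed p.1 ∧ CR.IsClosed p.2 ∧
      p.1 ≤ q₁ ∧ p.2 ≤ q₂}, mulSigmaKK F CR p.1.1 p.1.2

end Extensions

variable {W R : Type*} [HeytingAlgebra W] [DistribLattice R] [BoundedOrder R]
  {Wδ Rδ : Type*} [CompletelyDistribLattice Wδ] [CompletelyDistribLattice Rδ]


/-! The open element `ω = ⋁{β ∈ R : ◇'β ≤ o}` attached to an open `o ≥ ◇'^σ w` lies above `w`
(compactness, using that the `◇'`-image of the filter of `α ≥ κ` is down-directed), and every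
`α ▷' β` below `κ ▷'^π ω` has `◇'β ≤ o` (compactness, using that `{β : ◇'β ≤ o}` is an ideal),
so BD2 in `F` bounds it by `α ▷ ◇'β ≤ κ ▷^π o`. -/

namespace CanonicalExtension

variable {L : Type*} [DistribLattice L] [OrderBot L] [OrderTop L]
  {Lδ : Type*} [CompleteLattice Lδ] (C : CanonicalExtension L Lδ)

lemma monotone_e : Monotone C.e :=
  OrderHomClass.mono (⟨C.e, C.map_sup⟩ : SupHom L Lδ)

lemma e_le_e_iff {a b : L} : C.e a ≤ C.e b ↔ a ≤ b := by
  refine ⟨fun h => ?_, fun h => C.monotone_e h⟩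
  rw [← sup_eq_right, ← C.map_sup] at h
  exact sup_eq_right.mp (C.inj h)

lemma exists_e_le_sSup_of_sInf_le_sSup {D U : Set L} (hD : D.Nonempty)
    (hdir : DirectedOn (· ≥ ·) D) (h : sInf (C.e '' D) ≤ sSup (C.e '' U)) :
    ∃ d ∈ D, C.e d ≤ sSup (C.e '' U) := by
  obtain ⟨Fs, Gs, hFs, hGs, hle⟩ := C.compact D U h
  obtain ⟨d, hdD, hd⟩ := Finset.le_inf_of_directed_le D hD hdir Fs
    fun x hx => ⟨x, hFs hx, le_rfl⟩
  refine ⟨d, hdD, ?_⟩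
  calc C.e d ≤ sInf (C.e '' ↑Fs) := le_sInf <| by
          rintro _ ⟨x, hx, rfl⟩
          exact C.monotone_e (hd.trans (Finset.inf_le hx))
    _ ≤ sSup (C.e '' ↑Gs) := hle
    _ ≤ sSup (C.e '' U) := sSup_le_sSup (Set.image_mono hGs)

lemma exists_le_of_e_le_sSup {a : L} {U : Set L} (hU : U.Nonempty)
    (hdir : DirectedOn (· ≤ ·) U) (h : C.e a ≤ sSup (C.e '' U)) :
    ∃ u ∈ U, a ≤ u := by
  obtain ⟨Fs, Gs, hFs, hGs, hle⟩ := C.compact {a} U (by simpa using h)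
  obtain ⟨u, huU, hu⟩ := Finset.sup_le_of_le_directed U hU hdir Gs
    fun x hx => ⟨x, hGs hx, le_rfl⟩
  refine ⟨u, huU, (C.e_le_e_iff).mp ?_⟩
  calc C.e a ≤ sInf (C.e '' ↑Fs) := le_sInf <| by
          rintro _ ⟨x, hx, rfl⟩
          rw [hFs hx]
    _ ≤ sSup (C.e '' ↑Gs) := hle
    _ ≤ C.e u := sSup_le <| by
          rintro _ ⟨x, hx, rfl⟩
          exact C.monotone_e ((Finset.le_sup (f := id) hx).trans hu)

end CanonicalExtension

lemma LRCAlgebra.diaR_mono (F : LRCAlgebra W R) : Monotone F.diaR :=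
  OrderHomClass.mono (⟨F.diaR, F.diaR_sup⟩ : SupHom R W)

section Canonicity

variable (F : LRCAlgebra W R) (CW : CanonicalExtension W Wδ) (CR : CanonicalExtension R Rδ)

lemma directedOn_diaR_le (o : Wδ) : DirectedOn (· ≤ ·) {β : R | CW.e (F.diaR β) ≤ o} := by
  intro β₁ h₁ β₂ h₂
  refine ⟨β₁ ⊔ β₂, ?_, le_sup_left, le_sup_right⟩
  change CW.e (F.diaR (β₁ ⊔ β₂)) ≤ o
  rw [F.diaR_sup, CW.map_sup]
  exact sup_le h₁ h₂

lemma directedOn_ge_diaR_image (κ : Rδ) :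
    DirectedOn (· ≥ ·) (F.diaR '' {α | κ ≤ CR.e α}) := by
  rintro _ ⟨α₁, h₁, rfl⟩ _ ⟨α₂, h₂, rfl⟩
  refine ⟨F.diaR (α₁ ⊓ α₂), ⟨α₁ ⊓ α₂, ?_, rfl⟩,
    F.diaR_mono inf_le_left, F.diaR_mono inf_le_right⟩
  change κ ≤ CR.e (α₁ ⊓ α₂)
  rw [CR.map_inf]
  exact le_inf h₁ h₂

lemma le_sSup_diaR_le_of_diaRSigma_le {w : Rδ} {o : Wδ} (ho : CW.IsOpen o)
    (h : diaRSigma F CW CR w ≤ o) : w ≤ sSup (CR.e '' {β | CW.e (F.diaR β) ≤ o}) := by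
  obtain ⟨U, rfl⟩ := ho
  rw [CR.dense_closed w]
  refine sSup_le ?_
  rintro κ ⟨hκ, hκw⟩
  have hinf : sInf (CW.e '' (F.diaR '' {α | κ ≤ CR.e α})) ≤ sSup (CW.e '' U) := by
    rw [Set.image_image, sInf_image']
    exact le_trans (le_iSup_of_le ⟨κ, hκ, hκw⟩ le_rfl) h
  have hne : (F.diaR '' {α | κ ≤ CR.e α}).Nonempty :=
    ⟨_, ⊤, by simp [CR.map_top], rfl⟩
  obtain ⟨_, ⟨α, hκα, rfl⟩, hα⟩ := CW.exists_e_le_sSup_of_sInf_le_sSup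
    hne (directedOn_ge_diaR_image F CR κ) hinf
  exact hκα.trans (le_sSup ⟨α, hα, rfl⟩)

lemma boxRPiKO_le_boxPiKO (κ : Rδ) (o : Wδ) :
    boxRPiKO F CW CR κ (sSup (CR.e '' {β | CW.e (F.diaR β) ≤ o})) ≤ boxPiKO F CW CR κ o := by
  refine iSup_le fun ⟨(α, β), hβ, hκα⟩ => ?_
  obtain ⟨γ, hγ, hβγ⟩ := CR.exists_le_of_e_le_sSup ⟨⊥, by simp [F.diaR_bot, CW.map_bot]⟩
    (directedOn_diaR_le F CW o) hβ
  have hβo : CW.e (F.diaR β) ≤ o := (CW.monotone_e (F.diaR_mono hβγ)).trans hγ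
  exact (CW.monotone_e (F.bd2 α β)).trans (le_iSup_of_le ⟨(α, F.diaR β), hβo, hκα⟩ le_rfl)

end Canonicity

/-- **Canonicity of axiom BD2**: in the canonical extension of a heterogeneous
LRC-algebra, `q ▷'^π w ≤ q ▷^π (◇'^σ w)` for all `q, w ∈ Rδ`. -/
theorem canonicity_bd2 (F : LRCAlgebra W R)
    (CW : CanonicalExtension W Wδ) (CR : CanonicalExtension R Rδ)
    (q w : Rδ) :
    boxRPi F CW CR q w ≤ boxPi F CW CR q (diaRSigma F CW CR w) := by
  refine le_iInf fun ⟨(κ, o), ho, hwo, hκ, hκq⟩ => ?_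
  have hω : w ≤ sSup (CR.e '' {β | CW.e (F.diaR β) ≤ o}) :=
    le_sSup_diaR_le_of_diaRSigma_le F CW CR ho hwo
  exact (iInf_le _ ⟨(κ, _), ⟨_, rfl⟩, hω, hκ, hκq⟩).trans (boxRPiKO_le_boxPiKO F CW CR κ o)
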